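/- Let c₀ > 0 and let u : ℝ×ℝ → ℂ, n, m : ℝ×ℝ → ℝ be smooth functions satisfying ∂ₜ²u = ∂ₓ²u − u − n·u, ∂ₜn = ∂ₓ²m, and ∂ₜm = c₀²·(n + |u|²) on ℝ×ℝ, such that for every compact time interval there is R > 0 with u(t,x) = n(t,x) = m(t,x) = 0 whenever |x| ≥ R. Let R > 0, let φ_R ∈ C^∞(ℝ,ℝ) satisfy φ_R(x) = x for |x| ≤ R and φ_R(x) = 0 for |x| ≥ 2R, and let y : ℝ → ℝ be C¹. Define I(t) = Re∫ u·conj(∂ₜu) dx + 2·Re∫ φ_R(x−y(t))·∂ₓu·conj(∂ₜu) dx + (1/c₀²)·∫ φ_R(x−y(t))·n·∂ₓm dx. Then I is differentiable and for every t, I'(t) = −y'(t)·P(t) + y'(t)·∫ (1−φ_R'(x−y(t)))·( 2Re(∂ₓu·conj(∂ₜu)) + c₀^{−2}·n·∂ₓm ) dx − 2∫|∂ₓu|²dx − ½∫n²dx − (1/(2c₀²))∫|∂ₓm|²dx − ∫n|u|²dx + ∫ (1−φ_R'(x−y(t)))·( |∂ₜu|² + |∂ₓu|² − |u|² + (1/(2c₀²))|∂ₓm|²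 + ½n² ) dx, where P(t) = 2Re∫∂ₜu·conj(∂ₓu)dx + (1/c₀²)∫n·∂ₓm dx. -/

import Mathlib

open MeasureTheory Filter Topology Complex

/-- Partial derivative in the first (time) variable. -/
noncomputable def pt {E : Type*} [NormedAddCommGroup E] [NormedSpace ℝ E]
    (f : ℝ → ℝ → E) (t x : ℝ) : E := deriv (fun s => f s x) t

/-- Partial derivative in the second (space) variable. -/
noncomputable def px {E : Type*} [NormedAddCommGroup E] [NormedSpace ℝ E]
    (f : ℝ → ℝ → E) (t x : ℝ) : E := deriv (f t) x

/-- The momentum of the Klein-Gordon-Zakharov system. -/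
noncomputable def kgzMomentum (c₀ : ℝ) (u : ℝ → ℝ → ℂ) (n m : ℝ → ℝ → ℝ) (t : ℝ) : ℝ :=
  2 * (∫ x : ℝ, (pt u t x * (starRingEnd ℂ) (px u t x)).re)
    + (1 / c₀ ^ 2) * (∫ x : ℝ, n t x * px m t x)

/-- The localized virial functional with translating cutoff `φR` centered at `y(t)`. -/
noncomputable def kgzVirial (c₀ : ℝ) (u : ℝ → ℝ → ℂ) (n m : ℝ → ℝ → ℝ)
    (φR : ℝ → ℝ) (y : ℝ → ℝ) (t : ℝ) : ℝ :=
  (∫ x : ℝ, (u t x * (starRingEnd ℂ) (pt u t x)).re)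
  + 2 * (∫ x : ℝ, φR (x - y t) * (px u t x * (starRingEnd ℂ) (pt u t x)).re)
  + (1 / c₀ ^ 2) * (∫ x : ℝ, φR (x - y t) * n t x * px m t x)

variable {E : Type*} [NormedAddCommGroup E] [NormedSpace ℝ E]

/-- curve (s, x) for fixed x -/
lemma contDiff_tline (x : ℝ) : ContDiff ℝ (⊤ : ℕ∞) (fun s : ℝ => (s, x)) :=
  contDiff_id.prodMk contDiff_const

lemma contDiff_xline (t : ℝ) : ContDiff ℝ (⊤ : ℕ∞) (fun x : ℝ => (t, x)) :=
  contDiff_const.prodMk contDiff_id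

lemma pt_eq_fderiv {f : ℝ → ℝ → E} (hf : ContDiff ℝ (⊤ : ℕ∞) (fun p : ℝ × ℝ => f p.1 p.2))
    (t x : ℝ) : pt f t x = fderiv ℝ (fun p : ℝ × ℝ => f p.1 p.2) (t, x) (1, 0) := by
  have h : HasDerivAt (fun s => f s x)
      (fderiv ℝ (fun p : ℝ × ℝ => f p.1 p.2) (t, x) (1, 0)) t := by
    have h1 : HasFDerivAt (fun p : ℝ × ℝ => f p.1 p.2)
        (fderiv ℝ (fun p : ℝ × ℝ => f p.1 p.2) (t, x)) (t, x) :=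
      (hf.differentiable (by simp) (t, x)).hasFDerivAt
    have h2 : HasDerivAt (fun s : ℝ => (s, x)) ((1 : ℝ), (0 : ℝ)) t := by
      simpa using ((hasDerivAt_id t).prodMk (hasDerivAt_const t x))
    simpa [Function.comp_def] using h1.comp_hasDerivAt t h2
  exact h.deriv.symm ▸ rfl

lemma px_eq_fderiv {f : ℝ → ℝ → E} (hf : ContDiff ℝ (⊤ : ℕ∞) (fun p : ℝ × ℝ => f p.1 p.2))
    (t x : ℝ) : px f t x = fderiv ℝ (fun p : ℝ × ℝ => f p.1 p.2) (t, x) (0, 1) := by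
  have h : HasDerivAt (f t)
      (fderiv ℝ (fun p : ℝ × ℝ => f p.1 p.2) (t, x) (0, 1)) x := by
    have h1 : HasFDerivAt (fun p : ℝ × ℝ => f p.1 p.2)
        (fderiv ℝ (fun p : ℝ × ℝ => f p.1 p.2) (t, x)) (t, x) :=
      (hf.differentiable (by simp) (t, x)).hasFDerivAt
    have h2 : HasDerivAt (fun y : ℝ => (t, y)) ((0 : ℝ), (1 : ℝ)) x := by
      simpa using ((hasDerivAt_const x t).prodMk (hasDerivAt_id x))
    simpa [Function.comp_def] using h1.comp_hasDerivAt x h2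
  exact h.deriv.symm ▸ rfl

lemma contDiff_pt {f : ℝ → ℝ → E} (hf : ContDiff ℝ (⊤ : ℕ∞) (fun p : ℝ × ℝ => f p.1 p.2)) :
    ContDiff ℝ (⊤ : ℕ∞) (fun p : ℝ × ℝ => pt f p.1 p.2) := by
  have h : ContDiff ℝ (⊤ : ℕ∞) (fun p : ℝ × ℝ =>
      fderiv ℝ (fun q : ℝ × ℝ => f q.1 q.2) p (1, 0)) :=
    (hf.fderiv_right (le_refl _)).clm_apply contDiff_const
  have e : (fun p : ℝ × ℝ => pt f p.1 p.2)
      = fun p : ℝ × ℝ => fderiv ℝ (fun q : ℝ × ℝ => f q.1 q.2) p (1, 0) :=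
    funext fun p => pt_eq_fderiv hf p.1 p.2
  rw [e]; exact h

lemma contDiff_px {f : ℝ → ℝ → E} (hf : ContDiff ℝ (⊤ : ℕ∞) (fun p : ℝ × ℝ => f p.1 p.2)) :
    ContDiff ℝ (⊤ : ℕ∞) (fun p : ℝ × ℝ => px f p.1 p.2) := by
  have h : ContDiff ℝ (⊤ : ℕ∞) (fun p : ℝ × ℝ =>
      fderiv ℝ (fun q : ℝ × ℝ => f q.1 q.2) p (0, 1)) :=
    (hf.fderiv_right (le_refl _)).clm_apply contDiff_const
  have e : (fun p : ℝ × ℝ => px f p.1 p.2)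
      = fun p : ℝ × ℝ => fderiv ℝ (fun q : ℝ × ℝ => f q.1 q.2) p (0, 1) :=
    funext fun p => px_eq_fderiv hf p.1 p.2
  rw [e]; exact h

lemma contDiff_fix_t {f : ℝ → ℝ → E} (hf : ContDiff ℝ (⊤ : ℕ∞) (fun p : ℝ × ℝ => f p.1 p.2))
    (t : ℝ) : ContDiff ℝ (⊤ : ℕ∞) (f t) := hf.comp (contDiff_xline t)

lemma contDiff_fix_x {f : ℝ → ℝ → E} (hf : ContDiff ℝ (⊤ : ℕ∞) (fun p : ℝ × ℝ => f p.1 p.2))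
    (x : ℝ) : ContDiff ℝ (⊤ : ℕ∞) (fun s => f s x) := hf.comp (contDiff_tline x)

lemma hasDerivAt_px {f : ℝ → ℝ → E} (hf : ContDiff ℝ (⊤ : ℕ∞) (fun p : ℝ × ℝ => f p.1 p.2))
    (t x : ℝ) : HasDerivAt (f t) (px f t x) x :=
  ((contDiff_fix_t hf t).differentiable (by simp) x).hasDerivAt

lemma hasDerivAt_pt {f : ℝ → ℝ → E} (hf : ContDiff ℝ (⊤ : ℕ∞) (fun p : ℝ × ℝ => f p.1 p.2))
    (t x : ℝ) : HasDerivAt (fun s => f s x) (pt f t x) t :=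
  ((contDiff_fix_x hf x).differentiable (by simp) t).hasDerivAt

lemma pt_px_comm {f : ℝ → ℝ → E} (hf : ContDiff ℝ (⊤ : ℕ∞) (fun p : ℝ × ℝ => f p.1 p.2))
    (t x : ℝ) : pt (px f) t x = px (pt f) t x := by
  set F := fun p : ℝ × ℝ => f p.1 p.2 with hF
  have hdf : ∀ p : ℝ × ℝ, HasFDerivAt F (fderiv ℝ F p) p :=
    fun p => (hf.differentiable (by simp) p).hasFDerivAt
  have h2 : HasFDerivAt (fderiv ℝ F) (fderiv ℝ (fderiv ℝ F) (t, x)) (t, x) :=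
    (((hf.fderiv_right (m := (⊤ : ℕ∞)) (by simp)).differentiable (by simp)) (t, x)).hasFDerivAt
  have hsymm := second_derivative_symmetric hdf h2 (1, 0) (0, 1)
  have e1 : pt (px f) t x = fderiv ℝ (fderiv ℝ F) (t, x) (1, 0) (0, 1) := by
    have hpx : ContDiff ℝ (⊤ : ℕ∞) (fun p : ℝ × ℝ => px f p.1 p.2) := contDiff_px hf
    rw [pt_eq_fderiv hpx t x]
    have e : (fun p : ℝ × ℝ => px f p.1 p.2)
        = fun p : ℝ × ℝ => fderiv ℝ F p (0, 1) := funext fun p => px_eq_fderiv hf p.1 p.2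
    rw [e]
    have h3 := (h2.clm_apply (hasFDerivAt_const ((0 : ℝ), (1 : ℝ)) (t, x))).fderiv
    rw [h3]
    simp
  have e2 : px (pt f) t x = fderiv ℝ (fderiv ℝ F) (t, x) (0, 1) (1, 0) := by
    have hpt : ContDiff ℝ (⊤ : ℕ∞) (fun p : ℝ × ℝ => pt f p.1 p.2) := contDiff_pt hf
    rw [px_eq_fderiv hpt t x]
    have e : (fun p : ℝ × ℝ => pt f p.1 p.2)
        = fun p : ℝ × ℝ => fderiv ℝ F p (1, 0) := funext fun p => pt_eq_fderiv hf p.1 p.2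
    rw [e]
    have h3 := (h2.clm_apply (hasFDerivAt_const ((1 : ℝ), (0 : ℝ)) (t, x))).fderiv
    rw [h3]
    simp
  rw [e1, e2, hsymm]

lemma px_eq_zero {f : ℝ → ℝ → E} {t ρ x : ℝ}
    (h : ∀ x', ρ ≤ |x'| → f t x' = 0) (hx : ρ + 1 ≤ |x|) : px f t x = 0 := by
  have hev : f t =ᶠ[𝓝 x] (fun _ => (0 : E)) := by
    filter_upwards [Metric.ball_mem_nhds x one_pos] with x' hx'
    apply h
    have : |x' - x| < 1 := by simpa [Real.dist_eq] using hx'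
    have := abs_sub_abs_le_abs_sub x x'
    have h2 : |x| - |x'| ≤ |x' - x| := by rw [abs_sub_comm]; exact this
    linarith [abs_nonneg x']
  rw [px, hev.deriv_eq, deriv_const]

lemma pt_eq_zero {f : ℝ → ℝ → E} {a b t x : ℝ} (ht : t ∈ Set.Ioo a b)
    (h : ∀ s ∈ Set.Ioo a b, f s x = 0) : pt f t x = 0 := by
  have hev : (fun s => f s x) =ᶠ[𝓝 t] (fun _ => (0 : E)) := by
    filter_upwards [Ioo_mem_nhds ht.1 ht.2] with s hs using h s hs
  rw [pt, hev.deriv_eq, deriv_const]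

lemma integral_deriv_zero {f : ℝ → ℝ} (hf : ContDiff ℝ 1 f) (h2f : HasCompactSupport f) :
    (∫ x : ℝ, deriv f x) = 0 := by
  have hint : Integrable (deriv f) :=
    (hf.continuous_deriv le_rfl).integrable_of_hasCompactSupport h2f.deriv
  rw [← intervalIntegral.integral_Iic_add_Ioi (hint.integrableOn (s := Set.Iic 0))
    (hint.integrableOn (s := Set.Ioi 0)),
    h2f.integral_Iic_deriv_eq hf 0, h2f.integral_Ioi_deriv_eq hf 0]
  ring

lemma integrable_of_supp {f : ℝ → ℝ} (hf : Continuous f) {ρ : ℝ}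
    (h : ∀ x, ρ ≤ |x| → f x = 0) : Integrable f := by
  apply hf.integrable_of_hasCompactSupport
  apply HasCompactSupport.intro (isCompact_Icc (a := -|ρ|) (b := |ρ|))
  intro x hx
  apply h
  by_contra hlt
  push_neg at hlt
  have hb : |x| ≤ |ρ| := le_trans hlt.le (le_abs_self ρ)
  exact hx ⟨(abs_le.mp hb).1, (abs_le.mp hb).2⟩

lemma hasDerivAt_integral_param {F F' : ℝ → ℝ → ℝ} {t ρ : ℝ}
    (hF'cont : Continuous (fun p : ℝ × ℝ => F' p.1 p.2))
    (hFcont : ∀ s, Continuous (F s))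
    (hder : ∀ s ∈ Set.Ioo (t-1) (t+1), ∀ x, HasDerivAt (fun s' => F s' x) (F' s x) s)
    (hz : ∀ s ∈ Set.Ioo (t-1) (t+1), ∀ x, ρ ≤ |x| → F s x = 0 ∧ F' s x = 0) :
    HasDerivAt (fun s => ∫ x : ℝ, F s x) (∫ x : ℝ, F' t x) t := by
  have htI : t ∈ Set.Ioo (t-1) (t+1) := by constructor <;> linarith
  have hball : Metric.ball t (1/2) ⊆ Set.Ioo (t-1) (t+1) := by
    intro s hs
    have : |s - t| < 1/2 := by simpa [Real.dist_eq] using hs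
    have h1 := abs_lt.mp this
    constructor <;> linarith [h1.1, h1.2]
  set ρ' := |ρ| with hρ'
  have hρρ' : ρ ≤ ρ' := le_abs_self ρ
  -- bound
  obtain ⟨C, hC⟩ : ∃ C : ℝ, ∀ p ∈ Set.Icc (t-1) (t+1) ×ˢ Set.Icc (-ρ') ρ',
      ‖F' p.1 p.2‖ ≤ C := by
    rcases (IsCompact.exists_bound_of_continuousOn
      ((isCompact_Icc).prod isCompact_Icc)
      (hF'cont.continuousOn (s := Set.Icc (t-1) (t+1) ×ˢ Set.Icc (-ρ') ρ'))) with ⟨C, hC⟩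
    exact ⟨C, hC⟩
  have hC0 : 0 ≤ C := by
    have := hC (t, 0) (by
      constructor
      · constructor <;> (simp only []; linarith)
      · constructor <;> simp [hρ', abs_nonneg])
    exact le_trans (norm_nonneg _) this
  set bound : ℝ → ℝ := Set.indicator (Set.Icc (-ρ') ρ') (fun _ => C) with hbound
  have hboundint : Integrable bound :=
    (integrableOn_const (s := Set.Icc (-ρ') ρ') (C := C) measure_Icc_lt_top.ne).integrable_indicator measurableSet_Icc
  have key := hasDerivAt_integral_of_dominated_loc_of_deriv_le
    (F := F) (F' := F') (x₀ := t) (bound := bound) (μ := volume) (s := Metric.ball t (1/2))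
    (Metric.ball_mem_nhds t (by norm_num))
    (Eventually.of_forall fun s => (hFcont s).aestronglyMeasurable)
    (integrable_of_supp (hFcont t) (fun x hx => (hz t htI x hx).1))
    ((hF'cont.comp (continuous_const.prodMk continuous_id)).aestronglyMeasurable)
    (Eventually.of_forall ?_)
    hboundint
    (Eventually.of_forall fun x s hs => hder s (hball hs) x)
  · exact key.2
  · intro x s hs
    rcases le_or_gt (|x|) ρ' with hc | hc
    · have hx : x ∈ Set.Icc (-ρ') ρ' := abs_le.mp hc |> fun h => ⟨h.1, h.2⟩
      rw [hbound, Set.indicator_of_mem hx]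
      apply hC (s, x)
      have hs' := hball hs
      exact ⟨⟨hs'.1.le, hs'.2.le⟩, hx⟩
    · have hx : x ∉ Set.Icc (-ρ') ρ' := by
        intro hmem
        exact absurd (abs_le.mpr ⟨hmem.1, hmem.2⟩) (not_le.mpr hc)
      rw [hbound, Set.indicator_of_notMem hx]
      rw [(hz s (hball hs) x (le_trans hρρ' hc.le)).2]
      simp

lemma norm_sq_eq_re_mul_conj (z : ℂ) : ‖z‖^2 = (z * (starRingEnd ℂ) z).re := by
  rw [Complex.mul_conj]
  rw [Complex.ofReal_re, Complex.normSq_eq_norm_sq]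

lemma hasDerivAt_re_mul_conj {g h : ℝ → ℂ} {g' h' : ℂ} {s : ℝ}
    (hg : HasDerivAt g g' s) (hh : HasDerivAt h h' s) :
    HasDerivAt (fun s => (g s * (starRingEnd ℂ) (h s)).re)
      ((g' * (starRingEnd ℂ) (h s)).re + (g s * (starRingEnd ℂ) h').re) s := by
  have h1 : HasDerivAt (fun s => (starRingEnd ℂ) (h s)) ((starRingEnd ℂ) h') s := by
    simpa using hh.star
  have h2 := hg.mul h1
  have h3 := Complex.reCLM.hasFDerivAt.comp_hasDerivAt s h2
  exact h3

noncomputable def Fv (c₀ : ℝ) (u : ℝ → ℝ → ℂ) (n m : ℝ → ℝ → ℝ) (φR y : ℝ → ℝ)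
    (s x : ℝ) : ℝ :=
  (u s x * (starRingEnd ℂ) (pt u s x)).re
  + 2 * (φR (x - y s) * (px u s x * (starRingEnd ℂ) (pt u s x)).re)
  + 1 / c₀ ^ 2 * (φR (x - y s) * n s x * px m s x)

noncomputable def Fv' (c₀ : ℝ) (u : ℝ → ℝ → ℂ) (n m : ℝ → ℝ → ℝ) (φR y : ℝ → ℝ)
    (s x : ℝ) : ℝ :=
  (pt u s x * (starRingEnd ℂ) (pt u s x)).re
  + (u s x * (starRingEnd ℂ) (pt (pt u) s x)).re
  + 2 * (-(deriv y s) * deriv φR (x - y s) * (px u s x * (starRingEnd ℂ) (pt u s x)).re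
      + φR (x - y s) * ((pt (px u) s x * (starRingEnd ℂ) (pt u s x)).re
        + (px u s x * (starRingEnd ℂ) (pt (pt u) s x)).re))
  + 1 / c₀ ^ 2 * (-(deriv y s) * deriv φR (x - y s) * (n s x * px m s x)
      + φR (x - y s) * (pt n s x * px m s x + n s x * pt (px m) s x))

lemma Fv_hasDerivAt (c₀ : ℝ) {u : ℝ → ℝ → ℂ} {n m : ℝ → ℝ → ℝ} {φR y : ℝ → ℝ}
    (hu : ContDiff ℝ (⊤ : ℕ∞) (fun p : ℝ × ℝ => u p.1 p.2))
    (hn : ContDiff ℝ (⊤ : ℕ∞) (fun p : ℝ × ℝ => n p.1 p.2))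
    (hm : ContDiff ℝ (⊤ : ℕ∞) (fun p : ℝ × ℝ => m p.1 p.2))
    (hφR : ContDiff ℝ (⊤ : ℕ∞) φR) (hy : ContDiff ℝ 1 y) (s x : ℝ) :
    HasDerivAt (fun s' => Fv c₀ u n m φR y s' x) (Fv' c₀ u n m φR y s x) s := by
  have d1 : HasDerivAt (fun s' => u s' x) (pt u s x) s := hasDerivAt_pt hu s x
  have d2 : HasDerivAt (fun s' => pt u s' x) (pt (pt u) s x) s :=
    hasDerivAt_pt (contDiff_pt hu) s x
  have d3 : HasDerivAt (fun s' => px u s' x) (pt (px u) s x) s :=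
    hasDerivAt_pt (contDiff_px hu) s x
  have d4 : HasDerivAt (fun s' => n s' x) (pt n s x) s := hasDerivAt_pt hn s x
  have d5 : HasDerivAt (fun s' => px m s' x) (pt (px m) s x) s :=
    hasDerivAt_pt (contDiff_px hm) s x
  have dinner : HasDerivAt (fun s' => x - y s') (-deriv y s) s := by
    exact ((hy.differentiable one_ne_zero s).hasDerivAt).const_sub x
  have dφ : HasDerivAt (fun s' => φR (x - y s')) (deriv φR (x - y s) * -deriv y s) s := by
    exact HasDerivAt.comp s ((hφR.differentiable (by simp) _).hasDerivAt) dinner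
  have D1 := hasDerivAt_re_mul_conj d1 d2
  have D2 := ((dφ.mul (hasDerivAt_re_mul_conj d3 d2)).const_mul (2:ℝ))
  have D3 := (((dφ.mul d4).mul d5).const_mul (1/c₀^2 : ℝ))
  have DD := (D1.add D2).add D3
  have hfe : (fun s' => Fv c₀ u n m φR y s' x)
      = fun s' => ((u s' x * (starRingEnd ℂ) (pt u s' x)).re
        + 2 * (φR (x - y s') * (px u s' x * (starRingEnd ℂ) (pt u s' x)).re))
        + 1 / c₀ ^ 2 * (φR (x - y s') * n s' x * px m s' x) := by
    funext s'; simp only [Fv]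
  rw [hfe]
  refine DD.congr_deriv ?_
  simp only [Fv', Pi.mul_apply]; try ring

lemma hasCompactSupport_of_supp {f : ℝ → ℝ} {ρ : ℝ}
    (h : ∀ x, ρ ≤ |x| → f x = 0) : HasCompactSupport f := by
  apply HasCompactSupport.intro (isCompact_Icc (a := -|ρ|) (b := |ρ|))
  intro x hx
  apply h
  by_contra hlt
  push_neg at hlt
  have hb : |x| ≤ |ρ| := le_trans hlt.le (le_abs_self ρ)
  exact hx ⟨(abs_le.mp hb).1, (abs_le.mp hb).2⟩

lemma contDiff_re_mul_conj {f g : ℝ → ℂ} (hf : ContDiff ℝ (⊤ : ℕ∞) f) (hg : ContDiff ℝ (⊤ : ℕ∞) g) :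
    ContDiff ℝ (⊤ : ℕ∞) (fun x => (f x * (starRingEnd ℂ) (g x)).re) :=
  (Complex.reCLM.contDiff).comp (hf.mul ((Complex.conjCLE.toContinuousLinearMap.contDiff).comp hg))

noncomputable def Hv (c₀ : ℝ) (u : ℝ → ℝ → ℂ) (n m : ℝ → ℝ → ℝ) (φR y : ℝ → ℝ)
    (t x : ℝ) : ℝ :=
  (u t x * (starRingEnd ℂ) (px u t x)).re
  + φR (x - y t) * ((pt u t x * (starRingEnd ℂ) (pt u t x)).re
      + (px u t x * (starRingEnd ℂ) (px u t x)).re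
      - (u t x * (starRingEnd ℂ) (u t x)).re
      + 1 / (2 * c₀ ^ 2) * (px m t x) ^ 2 + 1 / 2 * (n t x) ^ 2)

noncomputable def DHv (c₀ : ℝ) (u : ℝ → ℝ → ℂ) (n m : ℝ → ℝ → ℝ) (φR y : ℝ → ℝ)
    (t x : ℝ) : ℝ :=
  ((px u t x * (starRingEnd ℂ) (px u t x)).re
    + (u t x * (starRingEnd ℂ) (px (px u) t x)).re)
  + deriv φR (x - y t) * ((pt u t x * (starRingEnd ℂ) (pt u t x)).re
      + (px u t x * (starRingEnd ℂ) (px u t x)).re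
      - (u t x * (starRingEnd ℂ) (u t x)).re
      + 1 / (2 * c₀ ^ 2) * (px m t x) ^ 2 + 1 / 2 * (n t x) ^ 2)
  + φR (x - y t) * (((px (pt u) t x * (starRingEnd ℂ) (pt u t x)).re
      + (pt u t x * (starRingEnd ℂ) (px (pt u) t x)).re)
      + ((px (px u) t x * (starRingEnd ℂ) (px u t x)).re
      + (px u t x * (starRingEnd ℂ) (px (px u) t x)).re)
      - ((px u t x * (starRingEnd ℂ) (u t x)).re
      + (u t x * (starRingEnd ℂ) (px u t x)).re)
      + 1 / c₀ ^ 2 * (px (px m) t x * px m t x) + n t x * px n t x)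

lemma Hv_hasDerivAt (c₀ : ℝ) {u : ℝ → ℝ → ℂ} {n m : ℝ → ℝ → ℝ} {φR y : ℝ → ℝ}
    (hu : ContDiff ℝ (⊤ : ℕ∞) (fun p : ℝ × ℝ => u p.1 p.2))
    (hn : ContDiff ℝ (⊤ : ℕ∞) (fun p : ℝ × ℝ => n p.1 p.2))
    (hm : ContDiff ℝ (⊤ : ℕ∞) (fun p : ℝ × ℝ => m p.1 p.2))
    (hφR : ContDiff ℝ (⊤ : ℕ∞) φR) (t x : ℝ) :
    HasDerivAt (fun x' => Hv c₀ u n m φR y t x') (DHv c₀ u n m φR y t x) x := by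
  have e1 : HasDerivAt (fun x' => u t x') (px u t x) x := hasDerivAt_px hu t x
  have e2 : HasDerivAt (fun x' => px u t x') (px (px u) t x) x :=
    hasDerivAt_px (contDiff_px hu) t x
  have e3 : HasDerivAt (fun x' => pt u t x') (px (pt u) t x) x :=
    hasDerivAt_px (contDiff_pt hu) t x
  have e4 : HasDerivAt (fun x' => n t x') (px n t x) x := hasDerivAt_px hn t x
  have e5 : HasDerivAt (fun x' => px m t x') (px (px m) t x) x :=
    hasDerivAt_px (contDiff_px hm) t x
  have eφ : HasDerivAt (fun x' => φR (x' - y t)) (deriv φR (x - y t) * 1) x := by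
    exact HasDerivAt.comp x ((hφR.differentiable (by simp) _).hasDerivAt)
      ((hasDerivAt_id x).sub_const (y t))
  have E1 := hasDerivAt_re_mul_conj e1 e2
  have Ein := ((((hasDerivAt_re_mul_conj e3 e3).add
      (hasDerivAt_re_mul_conj e2 e2)).sub (hasDerivAt_re_mul_conj e1 e1)).add
      ((e5.pow 2).const_mul (1/(2*c₀^2) : ℝ))).add ((e4.pow 2).const_mul (1/2 : ℝ))
  have DD := E1.add (eφ.mul Ein)
  have hfe : (fun x' => Hv c₀ u n m φR y t x')
      = fun x' => (u t x' * (starRingEnd ℂ) (px u t x')).re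
        + (fun x' => φR (x' - y t)) x' * ((pt u t x' * (starRingEnd ℂ) (pt u t x')).re
          + (px u t x' * (starRingEnd ℂ) (px u t x')).re
          - (u t x' * (starRingEnd ℂ) (u t x')).re
          + 1 / (2 * c₀ ^ 2) * (px m t x') ^ 2 + 1 / 2 * (n t x') ^ 2) := by
    funext x'; simp only [Hv]
  rw [hfe]
  refine DD.congr_deriv ?_
  simp only [DHv, Pi.add_apply, Pi.sub_apply, Pi.mul_apply, Pi.pow_apply]
  push_cast
  ring

lemma cont_re_mul_conj {X : Type*} [TopologicalSpace X] {f g : X → ℂ}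
    (hf : Continuous f) (hg : Continuous g) :
    Continuous fun x => (f x * (starRingEnd ℂ) (g x)).re :=
  Complex.continuous_re.comp (hf.mul (continuous_star.comp hg))

noncomputable def Gv (c₀ : ℝ) (u : ℝ → ℝ → ℂ) (n m : ℝ → ℝ → ℝ) (φR y : ℝ → ℝ)
    (t x : ℝ) : ℝ :=
  -deriv y t * (2 * (pt u t x * (starRingEnd ℂ) (px u t x)).re
      + 1 / c₀ ^ 2 * (n t x * px m t x))
  + deriv y t * ((1 - deriv φR (x - y t)) * (2 * (px u t x * (starRingEnd ℂ) (pt u t x)).re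
      + 1 / c₀ ^ 2 * (n t x * px m t x)))
  - 2 * ‖px u t x‖ ^ 2 - 1 / 2 * n t x ^ 2 - 1 / (2 * c₀ ^ 2) * px m t x ^ 2
  - n t x * ‖u t x‖ ^ 2
  + (1 - deriv φR (x - y t)) * (‖pt u t x‖ ^ 2 + ‖px u t x‖ ^ 2 - ‖u t x‖ ^ 2
      + 1 / (2 * c₀ ^ 2) * px m t x ^ 2 + 1 / 2 * n t x ^ 2)

lemma pt_px_m_eq (c₀ : ℝ) {u : ℝ → ℝ → ℂ} {n m : ℝ → ℝ → ℝ}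
    (hu : ContDiff ℝ (⊤ : ℕ∞) (fun p : ℝ × ℝ => u p.1 p.2))
    (hn : ContDiff ℝ (⊤ : ℕ∞) (fun p : ℝ × ℝ => n p.1 p.2))
    (hm : ContDiff ℝ (⊤ : ℕ∞) (fun p : ℝ × ℝ => m p.1 p.2))
    (heq_m : ∀ t x : ℝ, pt m t x = c₀ ^ 2 * (n t x + ‖u t x‖ ^ 2)) (t x : ℝ) :
    pt (px m) t x = c₀ ^ 2 * (px n t x + ((px u t x * (starRingEnd ℂ) (u t x)).re
      + (u t x * (starRingEnd ℂ) (px u t x)).re)) := by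
  rw [pt_px_comm hm t x]
  have hfun : pt m t = fun x' => c₀ ^ 2 * (n t x'
      + (u t x' * (starRingEnd ℂ) (u t x')).re) := by
    funext x'; rw [heq_m t x', ← norm_sq_eq_re_mul_conj]
  have hD : HasDerivAt (fun x' => c₀ ^ 2 * (n t x'
        + (u t x' * (starRingEnd ℂ) (u t x')).re))
      (c₀ ^ 2 * (px n t x + ((px u t x * (starRingEnd ℂ) (u t x)).re
        + (u t x * (starRingEnd ℂ) (px u t x)).re))) x :=
    ((hasDerivAt_px hn t x).add
      (hasDerivAt_re_mul_conj (hasDerivAt_px hu t x) (hasDerivAt_px hu t x))).const_mul (c₀ ^ 2)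
  show deriv (pt m t) x = _
  rw [hfun]
  exact hD.deriv

lemma integral_split_seven {a b c3 c4 c5 : ℝ} {q1 q2 q3 q4 q5 q6 q7 q8 : ℝ → ℝ}
    (h1 : Integrable q1) (h2 : Integrable q2) (h3 : Integrable q3) (h4 : Integrable q4)
    (h5 : Integrable q5) (h6 : Integrable q6) (h7 : Integrable q7) (h8 : Integrable q8) :
    ∫ x : ℝ, (a * (2 * q1 x + c3 * q2 x) + b * q3 x - 2 * q4 x - c4 * q5 x - c5 * q6 x
        - q7 x + q8 x)
      = a * (2 * (∫ x : ℝ, q1 x) + c3 * (∫ x : ℝ, q2 x)) + b * (∫ x : ℝ, q3 x)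
        - 2 * (∫ x : ℝ, q4 x) - c4 * (∫ x : ℝ, q5 x) - c5 * (∫ x : ℝ, q6 x)
        - (∫ x : ℝ, q7 x) + (∫ x : ℝ, q8 x) := by
  have h12 : Integrable (fun x => a * (2 * q1 x + c3 * q2 x)) :=
    ((h1.const_mul 2).add (h2.const_mul c3)).const_mul a
  have h3b : Integrable (fun x => b * q3 x) := h3.const_mul b
  have h42 : Integrable (fun x => 2 * q4 x) := h4.const_mul 2
  have h5c : Integrable (fun x => c4 * q5 x) := h5.const_mul c4
  have h6c : Integrable (fun x => c5 * q6 x) := h6.const_mul c5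
  have L2 : Integrable (fun x => a * (2 * q1 x + c3 * q2 x) + b * q3 x) := h12.add h3b
  have L3 : Integrable (fun x => a * (2 * q1 x + c3 * q2 x) + b * q3 x - 2 * q4 x) :=
    L2.sub h42
  have L4 : Integrable (fun x => a * (2 * q1 x + c3 * q2 x) + b * q3 x - 2 * q4 x
      - c4 * q5 x) := L3.sub h5c
  have L5 : Integrable (fun x => a * (2 * q1 x + c3 * q2 x) + b * q3 x - 2 * q4 x
      - c4 * q5 x - c5 * q6 x) := L4.sub h6c
  have L6 : Integrable (fun x => a * (2 * q1 x + c3 * q2 x) + b * q3 x - 2 * q4 x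
      - c4 * q5 x - c5 * q6 x - q7 x) := L5.sub h7
  rw [integral_add L6 h8, integral_sub L5 h7, integral_sub L4 h6c, integral_sub L3 h5c,
    integral_sub L2 h42, integral_add h12 h3b, integral_const_mul, integral_const_mul,
    integral_const_mul, integral_const_mul, integral_const_mul,
    integral_add (h1.const_mul 2) (h2.const_mul c3), integral_const_mul, integral_const_mul]

/-- The virial identity for the one-dimensional Klein-Gordon-Zakharov system:
the derivative of the localized virial functional `I(t)`. -/
theorem kgz_virial_identity (c₀ : ℝ) (hc₀ : 0 < c₀)
    (u : ℝ → ℝ → ℂ) (n m : ℝ → ℝ → ℝ)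
    (hu : ContDiff ℝ (⊤ : ℕ∞) (fun p : ℝ × ℝ => u p.1 p.2))
    (hn : ContDiff ℝ (⊤ : ℕ∞) (fun p : ℝ × ℝ => n p.1 p.2))
    (hm : ContDiff ℝ (⊤ : ℕ∞) (fun p : ℝ × ℝ => m p.1 p.2))
    (heq_u : ∀ t x : ℝ, pt (pt u) t x = px (px u) t x - u t x - (n t x : ℂ) * u t x)
    (heq_n : ∀ t x : ℝ, pt n t x = px (px m) t x)
    (heq_m : ∀ t x : ℝ, pt m t x = c₀ ^ 2 * (n t x + ‖u t x‖ ^ 2))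
    (hsupp : ∀ K : Set ℝ, IsCompact K → ∃ ρ > (0 : ℝ), ∀ t ∈ K, ∀ x : ℝ, ρ ≤ |x| →
      u t x = 0 ∧ n t x = 0 ∧ m t x = 0)
    (R : ℝ) (hR : 0 < R) (φR : ℝ → ℝ) (hφR_smooth : ContDiff ℝ (⊤ : ℕ∞) φR)
    (hφR_id : ∀ x : ℝ, |x| ≤ R → φR x = x)
    (hφR_zero : ∀ x : ℝ, 2 * R ≤ |x| → φR x = 0)
    (y : ℝ → ℝ) (hy : ContDiff ℝ 1 y) :
    ∀ t : ℝ, HasDerivAt (kgzVirial c₀ u n m φR y)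
      (-(deriv y t) * kgzMomentum c₀ u n m t
        + deriv y t * (∫ x : ℝ, (1 - deriv φR (x - y t)) *
            (2 * (px u t x * (starRingEnd ℂ) (pt u t x)).re
              + (1 / c₀ ^ 2) * (n t x * px m t x)))
        - 2 * (∫ x : ℝ, ‖px u t x‖ ^ 2)
        - (1 / 2) * (∫ x : ℝ, (n t x) ^ 2)
        - (1 / (2 * c₀ ^ 2)) * (∫ x : ℝ, (px m t x) ^ 2)
        - (∫ x : ℝ, n t x * ‖u t x‖ ^ 2)
        + (∫ x : ℝ, (1 - deriv φR (x - y t)) *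
            (‖pt u t x‖ ^ 2 + ‖px u t x‖ ^ 2 - ‖u t x‖ ^ 2
              + (1 / (2 * c₀ ^ 2)) * (px m t x) ^ 2 + (1 / 2) * (n t x) ^ 2))) t := by
  intro t
  have hc₀' : (c₀ : ℝ) ≠ 0 := ne_of_gt hc₀
  -- Step 1 : the virial functional as a single integral
  have hVeq : kgzVirial c₀ u n m φR y = fun s => ∫ x : ℝ, Fv c₀ u n m φR y s x := by
    funext s
    obtain ⟨ρs, hρspos, hρsval⟩ := hsupp (Set.Icc (s-1) (s+1)) isCompact_Icc
    have hsIoo : s ∈ Set.Ioo (s-1) (s+1) := ⟨by linarith, by linarith⟩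
    have hu0 : ∀ x, ρs ≤ |x| → u s x = 0 :=
      fun x hx => (hρsval s (Set.Ioo_subset_Icc_self hsIoo) x hx).1
    have hn0 : ∀ x, ρs ≤ |x| → n s x = 0 :=
      fun x hx => (hρsval s (Set.Ioo_subset_Icc_self hsIoo) x hx).2.1
    have hut0 : ∀ x, ρs ≤ |x| → pt u s x = 0 := fun x hx =>
      pt_eq_zero hsIoo (fun s' hs' => (hρsval s' (Set.Ioo_subset_Icc_self hs') x hx).1)
    have hux0 : ∀ x, ρs + 1 ≤ |x| → px u s x = 0 := fun x hx => px_eq_zero hu0 hx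
    have cu : Continuous (fun x => u s x) := (contDiff_fix_t hu s).continuous
    have cut : Continuous (fun x => pt u s x) :=
      (contDiff_fix_t (contDiff_pt hu) s).continuous
    have cux : Continuous (fun x => px u s x) :=
      (contDiff_fix_t (contDiff_px hu) s).continuous
    have cn : Continuous (fun x => n s x) := (contDiff_fix_t hn s).continuous
    have cmx : Continuous (fun x => px m s x) :=
      (contDiff_fix_t (contDiff_px hm) s).continuous
    have cφ : Continuous (fun x : ℝ => φR (x - y s)) :=
      hφR_smooth.continuous.comp (continuous_id.sub continuous_const)
    have i1 : Integrable (fun x => (u s x * (starRingEnd ℂ) (pt u s x)).re) :=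
      integrable_of_supp (cont_re_mul_conj cu cut) (ρ := ρs)
        (fun x hx => by rw [hu0 x hx]; simp)
    have i2 : Integrable (fun x => 2 * (φR (x - y s)
        * (px u s x * (starRingEnd ℂ) (pt u s x)).re)) :=
      integrable_of_supp (continuous_const.mul (cφ.mul (cont_re_mul_conj cux cut))) (ρ := ρs + 1)
        (fun x hx => by rw [hux0 x hx]; simp)
    have i3 : Integrable (fun x => 1 / c₀ ^ 2 * (φR (x - y s) * n s x * px m s x)) :=
      integrable_of_supp (continuous_const.mul ((cφ.mul cn).mul cmx)) (ρ := ρs)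
        (fun x hx => by rw [hn0 x hx]; simp)
    simp only [kgzVirial, Fv]
    rw [← integral_const_mul, ← integral_const_mul, ← integral_add i1 i2,
      ← integral_add (f := fun x => (u s x * (starRingEnd ℂ) (pt u s x)).re
        + 2 * (φR (x - y s) * (px u s x * (starRingEnd ℂ) (pt u s x)).re)) (i1.add i2) i3]
  -- support battery around `t`
  obtain ⟨ρ₀, hρ₀pos, hρ₀⟩ := hsupp (Set.Icc (t-1) (t+1)) isCompact_Icc
  have htI : t ∈ Set.Ioo (t-1) (t+1) := ⟨by linarith, by linarith⟩
  have Hu0 : ∀ s ∈ Set.Icc (t-1) (t+1), ∀ x, ρ₀ ≤ |x| → u s x = 0 :=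
    fun s hs x hx => (hρ₀ s hs x hx).1
  have Hn0 : ∀ s ∈ Set.Icc (t-1) (t+1), ∀ x, ρ₀ ≤ |x| → n s x = 0 :=
    fun s hs x hx => (hρ₀ s hs x hx).2.1
  have Hux : ∀ s ∈ Set.Icc (t-1) (t+1), ∀ x, ρ₀ + 1 ≤ |x| → px u s x = 0 :=
    fun s hs x hx => px_eq_zero (fun x' hx' => Hu0 s hs x' hx') hx
  have Huxx : ∀ s ∈ Set.Icc (t-1) (t+1), ∀ x, ρ₀ + 2 ≤ |x| → px (px u) s x = 0 :=
    fun s hs x hx => px_eq_zero (fun x' hx' => Hux s hs x' hx') (by linarith)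
  have Hnx : ∀ s ∈ Set.Icc (t-1) (t+1), ∀ x, ρ₀ + 1 ≤ |x| → px n s x = 0 :=
    fun s hs x hx => px_eq_zero (fun x' hx' => Hn0 s hs x' hx') hx
  have Hmx : ∀ s ∈ Set.Icc (t-1) (t+1), ∀ x, ρ₀ + 1 ≤ |x| → px m s x = 0 :=
    fun s hs x hx => px_eq_zero (fun x' hx' => (hρ₀ s hs x' hx').2.2) hx
  have Hmxx : ∀ s ∈ Set.Icc (t-1) (t+1), ∀ x, ρ₀ + 2 ≤ |x| → px (px m) s x = 0 :=
    fun s hs x hx => px_eq_zero (fun x' hx' => Hmx s hs x' hx') (by linarith)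
  have Hut : ∀ s ∈ Set.Ioo (t-1) (t+1), ∀ x, ρ₀ ≤ |x| → pt u s x = 0 :=
    fun s hs x hx => pt_eq_zero hs
      (fun s' hs' => Hu0 s' (Set.Ioo_subset_Icc_self hs') x hx)
  have Hutt : ∀ s ∈ Set.Ioo (t-1) (t+1), ∀ x, ρ₀ ≤ |x| → pt (pt u) s x = 0 :=
    fun s hs x hx => pt_eq_zero hs (fun s' hs' => Hut s' hs' x hx)
  have Hutx : ∀ s ∈ Set.Ioo (t-1) (t+1), ∀ x, ρ₀ + 1 ≤ |x| → pt (px u) s x = 0 :=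
    fun s hs x hx => pt_eq_zero hs
      (fun s' hs' => Hux s' (Set.Ioo_subset_Icc_self hs') x hx)
  have Huxt : ∀ s ∈ Set.Ioo (t-1) (t+1), ∀ x, ρ₀ + 1 ≤ |x| → px (pt u) s x = 0 :=
    fun s hs x hx => px_eq_zero (fun x' hx' => Hut s hs x' hx') hx
  have Hnt : ∀ s ∈ Set.Ioo (t-1) (t+1), ∀ x, ρ₀ ≤ |x| → pt n s x = 0 :=
    fun s hs x hx => pt_eq_zero hs
      (fun s' hs' => Hn0 s' (Set.Ioo_subset_Icc_self hs') x hx)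
  have Hmtx : ∀ s ∈ Set.Ioo (t-1) (t+1), ∀ x, ρ₀ + 1 ≤ |x| → pt (px m) s x = 0 :=
    fun s hs x hx => pt_eq_zero hs
      (fun s' hs' => Hmx s' (Set.Ioo_subset_Icc_self hs') x hx)
  -- Step 2 : differentiate under the integral
  have cφj : Continuous fun p : ℝ × ℝ => φR (p.2 - y p.1) :=
    hφR_smooth.continuous.comp (continuous_snd.sub (hy.continuous.comp continuous_fst))
  have cφ'j : Continuous fun p : ℝ × ℝ => deriv φR (p.2 - y p.1) :=
    (hφR_smooth.continuous_deriv (by simp)).comp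
      (continuous_snd.sub (hy.continuous.comp continuous_fst))
  have cYj : Continuous fun p : ℝ × ℝ => deriv y p.1 :=
    (hy.continuous_deriv le_rfl).comp continuous_fst
  have cU : Continuous fun p : ℝ × ℝ => u p.1 p.2 := hu.continuous
  have cUt : Continuous fun p : ℝ × ℝ => pt u p.1 p.2 := (contDiff_pt hu).continuous
  have cUx : Continuous fun p : ℝ × ℝ => px u p.1 p.2 := (contDiff_px hu).continuous
  have cUtt : Continuous fun p : ℝ × ℝ => pt (pt u) p.1 p.2 :=
    (contDiff_pt (contDiff_pt hu)).continuous
  have cUtx : Continuous fun p : ℝ × ℝ => pt (px u) p.1 p.2 :=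
    (contDiff_pt (contDiff_px hu)).continuous
  have cN : Continuous fun p : ℝ × ℝ => n p.1 p.2 := hn.continuous
  have cNt : Continuous fun p : ℝ × ℝ => pt n p.1 p.2 := (contDiff_pt hn).continuous
  have cMx : Continuous fun p : ℝ × ℝ => px m p.1 p.2 := (contDiff_px hm).continuous
  have cMtx : Continuous fun p : ℝ × ℝ => pt (px m) p.1 p.2 :=
    (contDiff_pt (contDiff_px hm)).continuous
  have hFjoint : Continuous (fun p : ℝ × ℝ => Fv c₀ u n m φR y p.1 p.2) := by
    simp only [Fv]
    exact ((cont_re_mul_conj cU cUt).add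
      (continuous_const.mul (cφj.mul (cont_re_mul_conj cUx cUt)))).add
      (continuous_const.mul ((cφj.mul cN).mul cMx))
  have hF'joint : Continuous (fun p : ℝ × ℝ => Fv' c₀ u n m φR y p.1 p.2) := by
    simp only [Fv']
    exact (((cont_re_mul_conj cUt cUt).add (cont_re_mul_conj cU cUtt)).add
      (continuous_const.mul (((cYj.neg.mul cφ'j).mul (cont_re_mul_conj cUx cUt)).add
        (cφj.mul ((cont_re_mul_conj cUtx cUt).add
          (cont_re_mul_conj cUx cUtt)))))).add
      (continuous_const.mul (((cYj.neg.mul cφ'j).mul (cN.mul cMx)).add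
        (cφj.mul ((cNt.mul cMx).add (cN.mul cMtx)))))
  have key : HasDerivAt (fun s => ∫ x : ℝ, Fv c₀ u n m φR y s x)
      (∫ x : ℝ, Fv' c₀ u n m φR y t x) t := by
    apply hasDerivAt_integral_param (ρ := ρ₀ + 2) hF'joint
    · exact fun s => hFjoint.comp (Continuous.prodMk_right s)
    · exact fun s _ x => Fv_hasDerivAt c₀ hu hn hm hφR_smooth hy s x
    · intro s hs x hx
      have hsc := Set.Ioo_subset_Icc_self hs
      have z1 : u s x = 0 := Hu0 s hsc x (by linarith)
      have z2 : pt u s x = 0 := Hut s hs x (by linarith)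
      have z3 : px u s x = 0 := Hux s hsc x (by linarith)
      have z4 : n s x = 0 := Hn0 s hsc x (by linarith)
      have z5 : px m s x = 0 := Hmx s hsc x (by linarith)
      have z6 : pt n s x = 0 := Hnt s hs x (by linarith)
      constructor
      · simp [Fv, z1, z3, z4]
      · simp [Fv', z1, z2, z3, z4, z5, z6]
  -- zeros at time t
  have htIc : t ∈ Set.Icc (t-1) (t+1) := Set.Ioo_subset_Icc_self htI
  have z1 : ∀ x, ρ₀ + 2 ≤ |x| → u t x = 0 := fun x hx => Hu0 t htIc x (by linarith)
  have z2 : ∀ x, ρ₀ + 2 ≤ |x| → pt u t x = 0 := fun x hx => Hut t htI x (by linarith)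
  have z3 : ∀ x, ρ₀ + 2 ≤ |x| → px u t x = 0 := fun x hx => Hux t htIc x (by linarith)
  have z4 : ∀ x, ρ₀ + 2 ≤ |x| → n t x = 0 := fun x hx => Hn0 t htIc x (by linarith)
  have z5 : ∀ x, ρ₀ + 2 ≤ |x| → px m t x = 0 := fun x hx => Hmx t htIc x (by linarith)
  -- x-continuity at time t
  have cxU : Continuous fun x => u t x := (contDiff_fix_t hu t).continuous
  have cxUt : Continuous fun x => pt u t x := (contDiff_fix_t (contDiff_pt hu) t).continuous
  have cxUx : Continuous fun x => px u t x := (contDiff_fix_t (contDiff_px hu) t).continuous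
  have cxN : Continuous fun x => n t x := (contDiff_fix_t hn t).continuous
  have cxMx : Continuous fun x => px m t x := (contDiff_fix_t (contDiff_px hm) t).continuous
  have cxφ' : Continuous fun x : ℝ => deriv φR (x - y t) :=
    (hφR_smooth.continuous_deriv (by simp)).comp (continuous_id.sub continuous_const)
  -- integrability of the target integrands
  have hq1 : Integrable (fun x => (pt u t x * (starRingEnd ℂ) (px u t x)).re) :=
    integrable_of_supp (cont_re_mul_conj cxUt cxUx) (ρ := ρ₀ + 2)
      (fun x hx => by rw [z2 x hx]; simp)
  have hq2 : Integrable (fun x => n t x * px m t x) :=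
    integrable_of_supp (cxN.mul cxMx) (ρ := ρ₀ + 2) (fun x hx => by rw [z4 x hx]; simp)
  have hq3 : Integrable (fun x => (1 - deriv φR (x - y t))
      * (2 * (px u t x * (starRingEnd ℂ) (pt u t x)).re
        + 1 / c₀ ^ 2 * (n t x * px m t x))) :=
    integrable_of_supp ((continuous_const.sub cxφ').mul
      ((continuous_const.mul (cont_re_mul_conj cxUx cxUt)).add
        (continuous_const.mul (cxN.mul cxMx)))) (ρ := ρ₀ + 2)
      (fun x hx => by rw [z3 x hx, z4 x hx]; simp)
  have hq4 : Integrable (fun x => ‖px u t x‖ ^ 2) :=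
    integrable_of_supp (cxUx.norm.pow 2) (ρ := ρ₀ + 2)
      (fun x hx => by rw [z3 x hx]; simp)
  have hq5 : Integrable (fun x => n t x ^ 2) :=
    integrable_of_supp (cxN.pow 2) (ρ := ρ₀ + 2) (fun x hx => by rw [z4 x hx]; simp)
  have hq6 : Integrable (fun x => px m t x ^ 2) :=
    integrable_of_supp (cxMx.pow 2) (ρ := ρ₀ + 2) (fun x hx => by rw [z5 x hx]; simp)
  have hq7 : Integrable (fun x => n t x * ‖u t x‖ ^ 2) :=
    integrable_of_supp (cxN.mul (cxU.norm.pow 2)) (ρ := ρ₀ + 2)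
      (fun x hx => by rw [z4 x hx]; simp)
  have hq8 : Integrable (fun x => (1 - deriv φR (x - y t))
      * (‖pt u t x‖ ^ 2 + ‖px u t x‖ ^ 2 - ‖u t x‖ ^ 2
        + 1 / (2 * c₀ ^ 2) * px m t x ^ 2 + 1 / 2 * n t x ^ 2)) :=
    integrable_of_supp ((continuous_const.sub cxφ').mul
      (((((cxUt.norm.pow 2).add (cxUx.norm.pow 2)).sub (cxU.norm.pow 2)).add
        (continuous_const.mul (cxMx.pow 2))).add
        (continuous_const.mul (cxN.pow 2)))) (ρ := ρ₀ + 2)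
      (fun x hx => by rw [z1 x hx, z2 x hx, z3 x hx, z4 x hx, z5 x hx]; simp)
  have hGint : Integrable (fun x => Gv c₀ u n m φR y t x) := by
    apply integrable_of_supp (ρ := ρ₀ + 2)
    · simp only [Gv]
      have cg1 : Continuous (fun x => -deriv y t
          * (2 * (pt u t x * (starRingEnd ℂ) (px u t x)).re
            + 1 / c₀ ^ 2 * (n t x * px m t x))) :=
        continuous_const.mul ((continuous_const.mul (cont_re_mul_conj cxUt cxUx)).add
          (continuous_const.mul (cxN.mul cxMx)))
      have cg2 : Continuous (fun x => deriv y t * ((1 - deriv φR (x - y t))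
          * (2 * (px u t x * (starRingEnd ℂ) (pt u t x)).re
            + 1 / c₀ ^ 2 * (n t x * px m t x)))) :=
        continuous_const.mul ((continuous_const.sub cxφ').mul
          ((continuous_const.mul (cont_re_mul_conj cxUx cxUt)).add
            (continuous_const.mul (cxN.mul cxMx))))
      have cg3 : Continuous (fun x => 2 * ‖px u t x‖ ^ 2) :=
        continuous_const.mul (cxUx.norm.pow 2)
      have cg4 : Continuous (fun x => 1 / 2 * n t x ^ 2) :=
        continuous_const.mul (cxN.pow 2)
      have cg5 : Continuous (fun x => 1 / (2 * c₀ ^ 2) * px m t x ^ 2) :=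
        continuous_const.mul (cxMx.pow 2)
      have cg6 : Continuous (fun x => n t x * ‖u t x‖ ^ 2) :=
        cxN.mul (cxU.norm.pow 2)
      have cg7 : Continuous (fun x => (1 - deriv φR (x - y t))
          * (‖pt u t x‖ ^ 2 + ‖px u t x‖ ^ 2 - ‖u t x‖ ^ 2
            + 1 / (2 * c₀ ^ 2) * px m t x ^ 2 + 1 / 2 * n t x ^ 2)) :=
        (continuous_const.sub cxφ').mul
          (((((cxUt.norm.pow 2).add (cxUx.norm.pow 2)).sub (cxU.norm.pow 2)).add
            (continuous_const.mul (cxMx.pow 2))).add (continuous_const.mul (cxN.pow 2)))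
      exact ((((((cg1.add cg2).sub cg3).sub cg4).sub cg5).sub cg6).add cg7)
    · intro x hx
      simp [Gv, z1 x hx, z2 x hx, z3 x hx, z4 x hx, z5 x hx]
  -- the divergence term
  have hHcd : ContDiff ℝ (⊤ : ℕ∞) (fun x' => Hv c₀ u n m φR y t x') := by
    have dxU := contDiff_fix_t hu t
    have dxUt := contDiff_fix_t (contDiff_pt hu) t
    have dxUx := contDiff_fix_t (contDiff_px hu) t
    have dxN := contDiff_fix_t hn t
    have dxMx := contDiff_fix_t (contDiff_px hm) t
    have dφ : ContDiff ℝ (⊤ : ℕ∞) (fun x' : ℝ => φR (x' - y t)) :=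
      hφR_smooth.comp (contDiff_id.sub contDiff_const)
    simp only [Hv]
    exact (contDiff_re_mul_conj dxU dxUx).add (dφ.mul
      (((((contDiff_re_mul_conj dxUt dxUt).add (contDiff_re_mul_conj dxUx dxUx)).sub
        (contDiff_re_mul_conj dxU dxU)).add
        (contDiff_const.mul (dxMx.pow 2))).add (contDiff_const.mul (dxN.pow 2))))
  have hHcs : HasCompactSupport (fun x' => Hv c₀ u n m φR y t x') :=
    hasCompactSupport_of_supp (ρ := ρ₀ + 2) (fun x hx => by
      simp [Hv, z1 x hx, z2 x hx, z3 x hx, z4 x hx, z5 x hx])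
  have hDHderiv : (fun x => DHv c₀ u n m φR y t x)
      = deriv (fun x' => Hv c₀ u n m φR y t x') :=
    funext fun x => ((Hv_hasDerivAt c₀ hu hn hm hφR_smooth t x).deriv).symm
  have hDHint : Integrable (fun x => DHv c₀ u n m φR y t x) := by
    rw [hDHderiv]
    exact (hHcd.continuous_deriv (by simp)).integrable_of_hasCompactSupport hHcs.deriv
  have hDH0 : (∫ x : ℝ, DHv c₀ u n m φR y t x) = 0 := by
    rw [hDHderiv]
    exact integral_deriv_zero (hHcd.of_le (by simp)) hHcs
  -- pointwise algebraic identity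
  have hsplit : ∀ x, Fv' c₀ u n m φR y t x
      = Gv c₀ u n m φR y t x + DHv c₀ u n m φR y t x := by
    intro x
    have h3 := pt_px_comm hu t x
    have h4 := pt_px_m_eq c₀ hu hn hm heq_m t x
    simp only [Fv', Gv, DHv, heq_u t x, heq_n t x, h3, h4, norm_sq_eq_re_mul_conj]
    simp only [map_sub, map_mul, map_add, Complex.conj_ofReal, Complex.sub_re,
      Complex.sub_im, Complex.add_re, Complex.add_im, Complex.mul_re, Complex.mul_im,
      Complex.ofReal_re, Complex.ofReal_im, Complex.conj_re, Complex.conj_im]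
    field_simp
    ring
  have hIG : (∫ x : ℝ, Fv' c₀ u n m φR y t x) = ∫ x : ℝ, Gv c₀ u n m φR y t x := by
    rw [show (fun x => Fv' c₀ u n m φR y t x)
      = fun x => Gv c₀ u n m φR y t x + DHv c₀ u n m φR y t x from funext hsplit]
    rw [integral_add hGint hDHint, hDH0, add_zero]
  rw [hVeq]
  have hfinal : (∫ x : ℝ, Fv' c₀ u n m φR y t x)
      = -deriv y t * kgzMomentum c₀ u n m t
        + deriv y t * (∫ x : ℝ, (1 - deriv φR (x - y t)) *
            (2 * (px u t x * (starRingEnd ℂ) (pt u t x)).re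
              + (1 / c₀ ^ 2) * (n t x * px m t x)))
        - 2 * (∫ x : ℝ, ‖px u t x‖ ^ 2)
        - (1 / 2) * (∫ x : ℝ, (n t x) ^ 2)
        - (1 / (2 * c₀ ^ 2)) * (∫ x : ℝ, (px m t x) ^ 2)
        - (∫ x : ℝ, n t x * ‖u t x‖ ^ 2)
        + (∫ x : ℝ, (1 - deriv φR (x - y t)) *
            (‖pt u t x‖ ^ 2 + ‖px u t x‖ ^ 2 - ‖u t x‖ ^ 2
              + (1 / (2 * c₀ ^ 2)) * (px m t x) ^ 2 + (1 / 2) * (n t x) ^ 2)) := by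
    rw [hIG]
    simp only [Gv]
    rw [integral_split_seven hq1 hq2 hq3 hq4 hq5 hq6 hq7 hq8]
    simp only [kgzMomentum]
  rw [← hfinal]
  exact key
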